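/- Let α ∈ Π_aff^{re,+} be an affine positive real root with α < c. Then the curve neighborhood of the identity at degree α is Γ_α(id) = {s_α}. -/

import Mathlib

open scoped BigOperators

namespace AffA

/-- Elements `⟨w, λ⟩` representing `w · t_λ` in the affine Weyl group
`W_aff = W ⋉ Q∨` of type `A_{n-1}^{(1)}`; the translation part `λ` is recorded
in `ε`-coordinates. -/
@[ext]
structure Aff (n : ℕ) where
  w : Equiv.Perm (Fin n)
  t : Fin n → ℤ

namespace Aff

variable {n : ℕ}

instance : Nonempty (Aff n) := ⟨⟨1, 0⟩⟩

/-- multiplication: `(w t_λ)(v t_μ) = (wv) t_{v⁻¹λ + μ}`. -/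
def mul' (x y : Aff n) : Aff n := ⟨x.w * y.w, fun i => x.t (y.w i) + y.t i⟩

def inv' (x : Aff n) : Aff n := ⟨x.w⁻¹, fun i => - x.t (x.w⁻¹ i)⟩

instance : Group (Aff n) where
  mul := mul'
  one := ⟨1, 0⟩
  inv := inv'
  mul_assoc a b c := by
    show mul' (mul' a b) c = mul' a (mul' b c)
    simp only [mul', Aff.mk.injEq]
    refine ⟨mul_assoc _ _ _, funext fun i => ?_⟩
    simp [Equiv.Perm.mul_apply, add_assoc]
  one_mul a := by
    obtain ⟨aw, av⟩ := a
    show mul' ⟨1, 0⟩ ⟨aw, av⟩ = ⟨aw, av⟩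
    simp only [mul', Aff.mk.injEq]
    exact ⟨one_mul _, funext fun i => by simp⟩
  mul_one a := by
    obtain ⟨aw, av⟩ := a
    show mul' ⟨aw, av⟩ ⟨1, 0⟩ = ⟨aw, av⟩
    simp only [mul', Aff.mk.injEq]
    exact ⟨mul_one _, funext fun i => by simp⟩
  inv_mul_cancel a := by
    obtain ⟨aw, av⟩ := a
    show mul' (inv' ⟨aw, av⟩) ⟨aw, av⟩ = ⟨1, 0⟩
    simp only [mul', inv', Aff.mk.injEq]
    exact ⟨inv_mul_cancel _, funext fun i => by simp⟩

/-- cyclic successor on the vertices `α_0, …, α_{n-1}` of the affine Dynkin diagram. -/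
def fsucc (i : Fin n) : Fin n :=
  ⟨(i.val + 1) % n, Nat.mod_lt _ (Nat.lt_of_le_of_lt (Nat.zero_le _) i.isLt)⟩

/-- the coefficient of `α_0`. -/
def coeff0 (a : Fin n → ℤ) : ℤ := if h : 0 < n then a ⟨0, h⟩ else 0

/-- the `ε`-coordinates of the finite part of an element of the affine root
lattice written in the coordinates of the simple roots `α_0, …, α_{n-1}`
(`δ` is sent to `0`). -/
def finPart (a : Fin n → ℤ) : Fin n → ℤ := fun i => a (fsucc i) - a i

/-- `c = δ = α_0 + α_1 + ⋯ + α_{n-1}`, in simple root coordinates. -/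
def cvec (n : ℕ) : Fin n → ℤ := fun _ => 1

/-- the affine Cartan matrix of type `A_{n-1}^{(1)}` (for `n ≥ 3`). -/
def cartan (i j : Fin n) : ℤ :=
  if i = j then 2 else if j = fsucc i ∨ i = fsucc j then -1 else 0

/-- the natural pairing `⟨a, b∨⟩` of elements of the affine root lattice
(simple root coordinates). -/
def pairing (a b : Fin n → ℤ) : ℤ := ∑ i : Fin n, ∑ j : Fin n, a i * cartan i j * b j

/-- real roots of the affine root system: lattice vectors of norm `2`. -/
def IsRealRoot (a : Fin n → ℤ) : Prop := pairing a a = 2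

/-- affine positive real roots: real roots with nonnegative coordinates. -/
def IsPosRoot (a : Fin n → ℤ) : Prop := IsRealRoot a ∧ ∀ i, 0 ≤ a i

/-- perpendicularity of affine roots. -/
def Perp (a b : Fin n → ℤ) : Prop := pairing a b = 0

/-- the support of an affine root. -/
def supp (a : Fin n → ℤ) : Finset (Fin n) := Finset.univ.filter fun i => a i ≠ 0

/-- the supports of `a` and `b` are disconnected in the affine Dynkin diagram
(a cycle on `α_0, …, α_{n-1}`): no vertex of one is equal or adjacent to a
vertex of the other. -/
def Disconn (a b : Fin n → ℤ) : Prop :=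
  ∀ i j : Fin n, a i ≠ 0 → b j ≠ 0 → i ≠ j ∧ j ≠ fsucc i ∧ i ≠ fsucc j

/-- for roots `a, b < c` (0–1 vectors), `a ∩ b = Σ_{α_i ∈ supp a ∩ supp b} α_i`. -/
def inter (a b : Fin n → ℤ) : Fin n → ℤ :=
  fun i => if a i ≠ 0 ∧ b i ≠ 0 then 1 else 0

instance : Nonempty (Equiv.Perm (Fin n)) := ⟨1⟩

/-- the reflection `s_β = s_α t_{mα}` associated to the real root `β = α + mδ`
(given in simple root coordinates). -/
noncomputable def sref (a : Fin n → ℤ) : Aff n :=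
  ⟨Classical.epsilon fun w : Equiv.Perm (Fin n) => ∃ p q : Fin n,
      finPart a = Pi.single p 1 - Pi.single q 1 ∧ w = Equiv.swap p q,
    fun i => coeff0 a * finPart a i⟩

/-- the simple reflections `s_0, …, s_{n-1}`. -/
noncomputable def simple (i : Fin n) : Aff n := sref (Pi.single i 1)

/-- the Coxeter length, via the Iwahori–Matsumoto formula
`ℓ(w t_λ) = Σ_{γ ∈ Π⁺} |χ(w·γ < 0) + ⟨λ, γ⟩|`. -/
def len (x : Aff n) : ℕ :=
  ∑ p : Fin n, ∑ q : Fin n,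
    if p < q then ((if x.w q < x.w p then (1 : ℤ) else 0) + (x.t p - x.t q)).natAbs else 0

/-- translation `t_v` by an element `v` of the (co)root lattice given in
`ε`-coordinates. -/
def trE (v : Fin n → ℤ) : Aff n := ⟨1, v⟩

/-- a Bruhat step: an edge of the moment graph which increases the length. -/
def bstep (u v : Aff n) : Prop :=
  (∃ a, IsPosRoot a ∧ v = u * sref a) ∧ len u < len v

/-- the Bruhat order: `u ≤ v` iff there is an increasing chain from `u` to `v`
in the moment graph. -/
def ble (u v : Aff n) : Prop := Relation.ReflTransGen bstep u v

/-- there is a chain in the moment graph from `u` to `v` of total degree `≤ d`. -/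
def ChainTo (d : Fin n → ℤ) (u v : Aff n) : Prop :=
  ∃ l : List (Fin n → ℤ),
    (∀ b ∈ l, IsPosRoot b) ∧ l.sum ≤ d ∧ v = u * (l.map sref).prod

/-- the set of elements reachable from some `u' ≤ u` by a chain of degree `≤ d`. -/
def nbhdSet (d : Fin n → ℤ) (u : Aff n) : Set (Aff n) :=
  {v | ∃ u', ble u' u ∧ ChainTo d u' v}

/-- the combinatorial curve neighborhood `Γ_d(u)`: the Bruhat-maximal elements
among those reachable from some `u' ≤ u` by a chain of degree `≤ d`. -/
def curveNbhd (d : Fin n → ℤ) (u : Aff n) : Set (Aff n) :=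
  {v | v ∈ nbhdSet d u ∧ ∀ x ∈ nbhdSet d u, ble v x → x = v}

/-- one step of the Hecke product. -/
noncomputable def heckeStep (u : Aff n) (i : Fin n) : Aff n :=
  if len u < len (u * simple i) then u * simple i else u

/-- the Hecke product `u · v`: multiply `u` on the right, left to right, by the
letters of a reduced word for `v`. -/
noncomputable def heckeMul (u v : Aff n) : Aff n :=
  (Classical.epsilon fun l : List (Fin n) =>
      (l.map simple).prod = v ∧ l.length = len v).foldl heckeStep u

/-- the Hecke product `s_{β_1} · s_{β_2} · ⋯ · s_{β_r}` of the reflections of a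
list of roots. -/
noncomputable def heckeList (l : List (Fin n → ℤ)) : Aff n :=
  l.foldl (fun u b => heckeMul u (sref b)) 1

/-- the defining recursion for `z_d`: `z_0 = id` and `z_d = s_α · z_{d-α}`
(Hecke product), where `α` is any maximal root with `α ≤ d`. -/
inductive IsZ : (Fin n → ℤ) → Aff n → Prop
  | zero : IsZ 0 1
  | step {d a : Fin n → ℤ} {x : Aff n} :
      IsPosRoot a → a ≤ d →
      (∀ b, IsPosRoot b → b ≤ d → a ≤ b → b = a) →
      IsZ (d - a) x → IsZ d (heckeMul (sref a) x)

end Aff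
end AffA

/-!
Every element of `nbhdSet α 1` is a product `s_{β₁} ⋯ s_{β_r}` of reflections in positive roots
with `β₁ + ⋯ + β_r ≤ α < δ`, that is, in indicator vectors of disjoint cyclic intervals inside the
interval of `α`. Such a product lies below `s_α` in the Bruhat order, so `s_α` is the unique
maximal element. While the `β_i` do not cover `α`, appending a simple root `α_i` from the gap is
a Bruhat step. Once they cover `α`, the last root `z` is merged with its last neighbour `x`: by the
braid relation `s_x s_z s_x = s_{x+z}` and commutation of orthogonal reflections, the word gets
shorter by one letter while going up one Bruhat step. Each of these steps is `u ↦ u s_β` with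
`u β ≥ 0`, which raises the length, as the Iwahori–Matsumoto formula shows. Identities between
reflections are checked on the (faithful) action of `W_aff` on the affine root lattice.
-/

section IntVectors

variable {ι : Type*} [Fintype ι]

lemma exists_pos_and_neg_of_sum_eq_zero {v : ι → ℤ} (hs : ∑ i, v i = 0) (hv : v ≠ 0) :
    ∃ p q, 0 < v p ∧ v q < 0 := by
  obtain ⟨p, hp⟩ : ∃ p, 0 < v p := by
    by_contra! h
    exact hv (funext fun i =>
      (Finset.sum_eq_zero_iff_of_nonpos fun q _ => h q).mp hs i (Finset.mem_univ _))
  obtain ⟨q, hq⟩ : ∃ q, v q < 0 := by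
    by_contra! h
    exact hv (funext fun i =>
      (Finset.sum_eq_zero_iff_of_nonneg fun q _ => h q).mp hs i (Finset.mem_univ _))
  exact ⟨p, q, hp, hq⟩

lemma mul_self_add_mul_self_le_sum (v : ι → ℤ) {p q : ι} (hpq : p ≠ q) :
    v p * v p + v q * v q ≤ ∑ i, v i * v i := by
  classical
  rw [← Finset.sum_pair (f := fun i => v i * v i) hpq]
  exact Finset.sum_le_sum_of_subset_of_nonneg (Finset.subset_univ _)
    fun i _ _ => mul_self_nonneg (v i)

lemma two_le_sum_mul_self {v : ι → ℤ} (hs : ∑ i, v i = 0) (hv : v ≠ 0) :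
    2 ≤ ∑ i, v i * v i := by
  obtain ⟨p, q, hp, hq⟩ := exists_pos_and_neg_of_sum_eq_zero hs hv
  have := mul_self_add_mul_self_le_sum v (p := p) (q := q) (by rintro rfl; omega)
  nlinarith

lemma exists_eq_single_sub_single [DecidableEq ι] {v : ι → ℤ} (hs : ∑ i, v i = 0)
    (hsq : ∑ i, v i * v i = 2) : ∃ p q, p ≠ q ∧ v = Pi.single p 1 - Pi.single q 1 := by
  have hv : v ≠ 0 := by rintro rfl; simp at hsq
  obtain ⟨p, q, hp, hq⟩ := exists_pos_and_neg_of_sum_eq_zero hs hv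
  have hpq : p ≠ q := by rintro rfl; omega
  refine ⟨p, q, hpq, ?_⟩
  set e : ι → ℤ := Pi.single p 1 - Pi.single q 1
  have hve : ∑ i, v i * e i = v p - v q := by
    simp [e, Pi.single_apply, mul_sub, Finset.sum_sub_distrib]
  have hee : ∑ i, e i * e i = 2 := by
    simp [e, Pi.single_apply, mul_sub, Finset.sum_sub_distrib, hpq, hpq.symm]
  have hexp : ∑ i, (v - e) i * (v - e) i
      = ∑ i, v i * v i - 2 * ∑ i, v i * e i + ∑ i, e i * e i := by
    rw [Finset.mul_sum, ← Finset.sum_sub_distrib, ← Finset.sum_add_distrib]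
    exact Finset.sum_congr rfl fun i _ => by simp only [Pi.sub_apply]; ring
  have hw : ∑ i, (v - e) i * (v - e) i = 0 := by
    have := Finset.sum_nonneg fun i (_ : i ∈ Finset.univ) => mul_self_nonneg ((v - e) i)
    nlinarith
  ext i
  have := (Finset.sum_eq_zero_iff_of_nonneg fun i _ => mul_self_nonneg ((v - e) i)).mp hw i
    (Finset.mem_univ _)
  simpa [sub_eq_zero] using this

end IntVectors

lemma Finset.sum_sum_eq_of_eq_zero {ι M : Type*} [Fintype ι] [DecidableEq ι] [AddCommMonoid M]
    {g : ι → ι → M} {p q : ι} (hpq : p ≠ q)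
    (hg : ∀ u v, u ≠ p → u ≠ q → v ≠ p → v ≠ q → g u v = 0) :
    ∑ u, ∑ v, g u v = g p p + g p q + g q p + g q q
      + ∑ a ∈ ({p, q} : Finset ι)ᶜ, (g a p + g a q + g p a + g q a) := by
  have hS : ∀ u ∈ ({p, q} : Finset ι)ᶜ, ∑ v ∈ ({p, q} : Finset ι)ᶜ, g u v = 0 := by
    intro u hu
    refine Finset.sum_eq_zero fun v hv => ?_
    simp only [Finset.mem_compl, Finset.mem_insert, Finset.mem_singleton, not_or] at hu hv
    exact hg u v hu.1 hu.2 hv.1 hv.2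
  rw [← Finset.sum_add_sum_compl {p, q}]
  simp only [← Finset.sum_add_sum_compl {p, q} (g _), Finset.sum_pair hpq, Finset.sum_add_distrib,
    Finset.sum_congr rfl hS]
  rw [Finset.sum_const_zero]
  abel

lemma List.exists_eq_append_cons_last {α : Type*} (P : α → Prop) {l : List α}
    (h : ∃ a ∈ l, P a) : ∃ l₁ a l₂, l = l₁ ++ a :: l₂ ∧ P a ∧ ∀ b ∈ l₂, ¬ P b := by
  induction l with
  | nil => simp at h
  | cons c l ih =>
    by_cases hl : ∃ a ∈ l, P a
    · obtain ⟨l₁, a, l₂, rfl, ha, hl₂⟩ := ih hl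
      exact ⟨c :: l₁, a, l₂, rfl, ha, hl₂⟩
    · obtain ⟨a, ha, hPa⟩ := h
      obtain rfl | ha := List.mem_cons.mp ha
      · exact ⟨[], a, l, rfl, hPa, fun b hb hPb => hl ⟨b, hb, hPb⟩⟩
      · exact absurd ⟨a, ha, hPa⟩ hl

namespace AffA.Aff

variable {n : ℕ}

@[simp] lemma mul_w (x y : Aff n) : (x * y).w = x.w * y.w := rfl

@[simp] lemma mul_t (x y : Aff n) (i : Fin n) : (x * y).t i = x.t (y.w i) + y.t i := rfl

@[simp] lemma one_w : (1 : Aff n).w = 1 := rfl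

@[simp] lemma one_t (i : Fin n) : (1 : Aff n).t i = 0 := rfl

lemma len_one : len (1 : Aff n) = 0 := by
  simp +contextual [len, lt_asymm]

lemma len_le_of_ble {u v : Aff n} (h : ble u v) : len u ≤ len v := by
  induction h with
  | refl => exact le_rfl
  | tail _ hstep ih => exact ih.trans hstep.2.le

lemma eq_of_ble_of_len_le {u v : Aff n} (h : ble u v) (hl : len v ≤ len u) : u = v := by
  rcases Relation.ReflTransGen.cases_head h with rfl | ⟨c, hc, hcv⟩
  · rfl
  · exact absurd (hc.2.trans_le (len_le_of_ble hcv)) hl.not_gt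

lemma eq_one_of_ble_one {u : Aff n} (h : ble u 1) : u = 1 :=
  eq_of_ble_of_len_le h (len_one ▸ Nat.zero_le _)

/-! ### The cyclic Dynkin diagram and the pairing -/

lemma fsucc_val (i : Fin n) : (fsucc i).val = if i.val = n - 1 then 0 else i.val + 1 := by
  have := i.isLt
  show (i.val + 1) % n = _
  split_ifs with h
  · rw [h, Nat.sub_add_cancel (by omega), Nat.mod_self]
  · exact Nat.mod_eq_of_lt (by omega)

lemma fsucc_injective : Function.Injective (fsucc : Fin n → Fin n) := by
  intro i j h
  have h' := congrArg Fin.val h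
  rw [fsucc_val, fsucc_val] at h'
  have := i.isLt; have := j.isLt
  ext; split_ifs at h' <;> omega

noncomputable def succPerm (n : ℕ) : Equiv.Perm (Fin n) :=
  Equiv.ofBijective fsucc (Finite.injective_iff_bijective.mp fsucc_injective)

lemma sum_comp_fsucc {M : Type*} [AddCommMonoid M] (f : Fin n → M) :
    ∑ i, f (fsucc i) = ∑ i, f i :=
  Equiv.sum_comp (succPerm n) f

lemma fsucc_ne (hn : 3 ≤ n) (i : Fin n) : fsucc i ≠ i := by
  intro h
  have := congrArg Fin.val h
  rw [fsucc_val] at this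
  split_ifs at this <;> omega

lemma fsucc_fsucc_ne (hn : 3 ≤ n) (i : Fin n) : fsucc (fsucc i) ≠ i := by
  intro h
  have h' := congrArg Fin.val h
  have := i.isLt
  rw [fsucc_val, fsucc_val] at h'
  split_ifs at h' <;> omega

lemma fsucc_mk {k : ℕ} (hk : k + 1 < n) : fsucc ⟨k, by omega⟩ = (⟨k + 1, hk⟩ : Fin n) := by
  ext
  rw [fsucc_val, if_neg (show k ≠ n - 1 by omega)]

lemma cartan_eq (hn : 3 ≤ n) (i j : Fin n) :
    cartan i j = 2 * (if i = j then 1 else 0) - (if j = fsucc i then 1 else 0)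
      - (if i = fsucc j then 1 else 0) := by
  unfold cartan
  by_cases hij : i = j
  · subst hij
    simp [(fsucc_ne hn i).symm]
  · by_cases h1 : j = fsucc i
    · subst h1
      simp [hij, (fsucc_fsucc_ne hn i).symm]
    · by_cases h2 : i = fsucc j
      · subst h2
        simp [fsucc_ne hn j, (fsucc_fsucc_ne hn j).symm]
      · simp [hij, h1, h2]

lemma pairing_eq_sum (hn : 3 ≤ n) (a b : Fin n → ℤ) :
    pairing a b = ∑ i, (2 * a i * b i - a i * b (fsucc i) - a (fsucc i) * b i) := by
  have h : ∀ i, ∑ j, a i * cartan i j * b j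
      = 2 * a i * b i - a i * b (fsucc i) - ∑ j, (if i = fsucc j then a i * b j else 0) := by
    intro i
    simp only [cartan_eq hn, mul_sub, sub_mul, Finset.sum_sub_distrib, mul_ite, ite_mul,
      mul_zero, zero_mul, mul_one, Finset.sum_ite_eq, Finset.sum_ite_eq', Finset.mem_univ,
      if_true]
    ring
  simp only [pairing, h, Finset.sum_sub_distrib]
  rw [Finset.sum_comm (f := fun i j => if i = fsucc j then a i * b j else 0)]
  simp

/-- In `ε`-coordinates the pairing is the standard dot product. -/
lemma pairing_eq_sum_finPart (hn : 3 ≤ n) (a b : Fin n → ℤ) :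
    pairing a b = ∑ i, finPart a i * finPart b i := by
  have e : ∑ i, a (fsucc i) * b (fsucc i) = ∑ i, a i * b i :=
    sum_comp_fsucc fun i => a i * b i
  calc pairing a b
      = ∑ i, ((a (fsucc i) - a i) * (b (fsucc i) - b i)
          + (a i * b i - a (fsucc i) * b (fsucc i))) := by
        rw [pairing_eq_sum hn]
        exact Finset.sum_congr rfl fun i _ => by ring
    _ = ∑ i, finPart a i * finPart b i := by
        rw [Finset.sum_add_distrib, Finset.sum_sub_distrib, e, sub_self, add_zero]
        rfl

lemma pairing_comm (hn : 3 ≤ n) (a b : Fin n → ℤ) : pairing a b = pairing b a := by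
  simp only [pairing_eq_sum_finPart hn, mul_comm]

lemma pairing_add_left (a a' b : Fin n → ℤ) :
    pairing (a + a') b = pairing a b + pairing a' b := by
  simp only [pairing, Pi.add_apply, add_mul, Finset.sum_add_distrib]

lemma pairing_add_right (a b b' : Fin n → ℤ) :
    pairing a (b + b') = pairing a b + pairing a b' := by
  simp only [pairing, Pi.add_apply, mul_add, Finset.sum_add_distrib]

lemma pairing_smul_left (c : ℤ) (a b : Fin n → ℤ) : pairing (c • a) b = c * pairing a b := by
  simp only [pairing, Pi.smul_apply, smul_eq_mul, Finset.mul_sum, mul_assoc]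

lemma pairing_sub_left (a a' b : Fin n → ℤ) :
    pairing (a - a') b = pairing a b - pairing a' b := by
  simp only [pairing, Pi.sub_apply, sub_mul, Finset.sum_sub_distrib]

lemma pairing_list_sum_left (l : List (Fin n → ℤ)) (b : Fin n → ℤ) :
    pairing l.sum b = (l.map (pairing · b)).sum := by
  induction l with
  | nil => simp [pairing]
  | cons a l ih => simp [pairing_add_left, ih]

lemma IsRealRoot.ne_zero {b : Fin n → ℤ} (hb : IsRealRoot b) : b ≠ 0 := by
  rintro rfl
  simp [IsRealRoot, pairing] at hb

lemma disjoint_of_add_le_cvec {a b : Fin n → ℤ} (ha : 0 ≤ a) (hb : 0 ≤ b) (h : a + b ≤ cvec n)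
    (i : Fin n) : a i = 0 ∨ b i = 0 := by
  have := h i; have := ha i; have := hb i
  simp only [Pi.add_apply, cvec, Pi.zero_apply] at *
  omega

lemma pairing_nonpos (hn : 3 ≤ n) {a b : Fin n → ℤ} (ha : 0 ≤ a) (hb : 0 ≤ b)
    (h : a + b ≤ cvec n) : pairing a b ≤ 0 := by
  rw [pairing_eq_sum hn]
  refine Finset.sum_nonpos fun i _ => ?_
  have h0 : a i * b i = 0 := by rcases disjoint_of_add_le_cvec ha hb h i with h' | h' <;> simp [h']
  nlinarith [mul_nonneg (ha i) (hb (fsucc i)), mul_nonneg (ha (fsucc i)) (hb i)]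

lemma finPart_add (a b : Fin n → ℤ) : finPart (a + b) = finPart a + finPart b := by
  ext i; simp only [finPart, Pi.add_apply]; ring

lemma finPart_sub (a b : Fin n → ℤ) : finPart (a - b) = finPart a - finPart b := by
  ext i; simp only [finPart, Pi.sub_apply]; ring

lemma finPart_cvec : finPart (cvec n) = 0 := by
  ext i; simp [finPart, cvec]

lemma sum_finPart (a : Fin n → ℤ) : ∑ i, finPart a i = 0 := by
  simp only [finPart, Finset.sum_sub_distrib, sum_comp_fsucc fun i => a i, sub_self]

lemma coeff0_eq (hn : 0 < n) (a : Fin n → ℤ) : coeff0 a = a ⟨0, hn⟩ := dif_pos hn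

lemma coeff0_add (a b : Fin n → ℤ) : coeff0 (a + b) = coeff0 a + coeff0 b := by
  unfold coeff0; split_ifs <;> simp

lemma coeff0_sub (a b : Fin n → ℤ) : coeff0 (a - b) = coeff0 a - coeff0 b := by
  unfold coeff0; split_ifs <;> simp

lemma finPart_smul (c : ℤ) (a : Fin n → ℤ) : finPart (c • a) = c • finPart a := by
  ext i; simp only [finPart, Pi.smul_apply, smul_eq_mul]; ring

lemma coeff0_smul (c : ℤ) (a : Fin n → ℤ) : coeff0 (c • a) = c * coeff0 a := by
  unfold coeff0; split_ifs <;> simp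

/-! ### The action on the affine root lattice -/

lemma eq_of_finPart_eq {a b : Fin n → ℤ} (hf : finPart a = finPart b) (h0 : coeff0 a = coeff0 b) :
    a = b := by
  ext ⟨i, hi⟩
  have hn : 0 < n := by omega
  have key : ∀ k (hk : k < n), a ⟨k, hk⟩ - b ⟨k, hk⟩ = a ⟨0, hn⟩ - b ⟨0, hn⟩ := by
    intro k
    induction k with
    | zero => intro _; rfl
    | succ k ih =>
      intro hk
      have := congrFun hf ⟨k, by omega⟩
      simp only [finPart, fsucc_mk hk] at this
      rw [← ih (by omega)]
      linarith
  have := key i hi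
  rw [coeff0_eq hn, coeff0_eq hn] at h0
  linarith

/-- The element of the root lattice with finite part `ξ` (if `∑ ξ = 0`) and `α₀`-coefficient `m`. -/
def ofFinPart (ξ : Fin n → ℤ) (m : ℤ) : Fin n → ℤ := fun i => m + ∑ k ∈ Finset.Iio i, ξ k

lemma coeff0_ofFinPart (hn : 0 < n) (ξ : Fin n → ℤ) (m : ℤ) : coeff0 (ofFinPart ξ m) = m := by
  rw [coeff0_eq hn, ofFinPart, add_eq_left]
  exact Finset.sum_eq_zero fun k hk => by
    simp only [Finset.mem_Iio, Fin.lt_def] at hk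
    omega

lemma finPart_ofFinPart {ξ : Fin n → ℤ} (hξ : ∑ i, ξ i = 0) (m : ℤ) :
    finPart (ofFinPart ξ m) = ξ := by
  ext i
  simp only [finPart, ofFinPart, add_sub_add_left_eq_sub]
  by_cases hi : i.val = n - 1
  · have h0 : Finset.Iio (fsucc i) = ∅ := by
      ext k; simp [Fin.lt_def, fsucc_val, hi]
    have hI : Finset.Iio i = Finset.univ.erase i := by
      ext k; simp only [Finset.mem_Iio, Finset.mem_erase, Finset.mem_univ, Fin.lt_def, ne_eq,
        Fin.ext_iff, and_true]
      have := k.isLt; omega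
    rw [h0, hI, Finset.sum_empty, ← Finset.add_sum_erase _ _ (Finset.mem_univ i)] at *
    linarith
  · have hI : Finset.Iio (fsucc i) = insert i (Finset.Iio i) := by
      ext k; simp [Fin.lt_def, fsucc_val, hi]
    rw [hI, Finset.sum_insert (by simp)]
    ring

lemma ofFinPart_finPart (hn : 0 < n) (a : Fin n → ℤ) : ofFinPart (finPart a) (coeff0 a) = a :=
  eq_of_finPart_eq (finPart_ofFinPart (sum_finPart a) _) (coeff0_ofFinPart hn _ _)

/-- The action of `W_aff` on the affine root lattice: `w t_λ` sends `α + kδ` to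
`wα + (k - ⟨λ, α⟩)δ`. -/
def act (x : Aff n) : (Fin n → ℤ) →+ (Fin n → ℤ) where
  toFun a := ofFinPart (fun j => finPart a (x.w⁻¹ j)) (coeff0 a - ∑ i, x.t i * finPart a i)
  map_zero' := by ext i; simp [ofFinPart, finPart, coeff0]
  map_add' a b := by
    ext i
    simp only [ofFinPart, finPart_add, coeff0_add, Pi.add_apply, mul_add, Finset.sum_add_distrib]
    ring

lemma finPart_act (x : Aff n) (a : Fin n → ℤ) :
    finPart (act x a) = fun j => finPart a (x.w⁻¹ j) :=
  finPart_ofFinPart (by rw [Equiv.sum_comp x.w⁻¹ (finPart a), sum_finPart]) _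

lemma coeff0_act (hn : 0 < n) (x : Aff n) (a : Fin n → ℤ) :
    coeff0 (act x a) = coeff0 a - ∑ i, x.t i * finPart a i :=
  coeff0_ofFinPart hn _ _

@[simp] lemma act_one (hn : 0 < n) (a : Fin n → ℤ) : act 1 a = a :=
  eq_of_finPart_eq (by simp [finPart_act]) (by simp [coeff0_act hn])

lemma act_mul (hn : 0 < n) (x y : Aff n) (a : Fin n → ℤ) : act (x * y) a = act x (act y a) := by
  refine eq_of_finPart_eq (by simp [finPart_act]) ?_
  simp only [coeff0_act hn, finPart_act, mul_t, add_mul, Finset.sum_add_distrib]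
  rw [← Equiv.sum_comp y.w (fun i => x.t i * finPart a (y.w⁻¹ i))]
  simp only [Equiv.Perm.coe_inv, Equiv.symm_apply_apply]
  ring

/-! ### Reflections -/

lemma IsRealRoot.exists_finPart_eq (hn : 3 ≤ n) {b : Fin n → ℤ} (hb : IsRealRoot b) :
    ∃ p q, p ≠ q ∧ finPart b = Pi.single p 1 - Pi.single q 1 :=
  exists_eq_single_sub_single (sum_finPart b) ((pairing_eq_sum_finPart hn b b).symm.trans hb)

lemma single_sub_single_inj {p q p' q' : Fin n} (hpq : p ≠ q)
    (h : (Pi.single p 1 - Pi.single q 1 : Fin n → ℤ) = Pi.single p' 1 - Pi.single q' 1) :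
    p = p' ∧ q = q' := by
  have hp := congrFun h p
  have hq := congrFun h q
  simp only [Pi.sub_apply, Pi.single_apply, if_pos, if_neg hpq, if_neg hpq.symm] at hp hq
  constructor
  · by_contra hne
    rw [if_neg hne] at hp
    split_ifs at hp <;> omega
  · by_contra hne
    rw [if_neg hne] at hq
    split_ifs at hq <;> omega

lemma sref_w {b : Fin n → ℤ} {p q : Fin n} (hpq : p ≠ q)
    (hf : finPart b = Pi.single p 1 - Pi.single q 1) : (sref b).w = Equiv.swap p q := by
  obtain ⟨p', q', hf', hw⟩ := Classical.epsilon_spec (p := fun w : Equiv.Perm (Fin n) =>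
    ∃ p q : Fin n, finPart b = Pi.single p 1 - Pi.single q 1 ∧ w = Equiv.swap p q)
    ⟨_, p, q, hf, rfl⟩
  obtain ⟨rfl, rfl⟩ := single_sub_single_inj hpq (hf.symm.trans hf')
  exact hw

lemma pairing_single_sub_single (hn : 3 ≤ n) {b : Fin n → ℤ} {p q : Fin n}
    (hf : finPart b = Pi.single p 1 - Pi.single q 1) (a : Fin n → ℤ) :
    pairing a b = finPart a p - finPart a q := by
  simp [pairing_eq_sum_finPart hn, hf, Pi.single_apply, mul_sub, Finset.sum_sub_distrib]

lemma act_sref (hn : 3 ≤ n) {b : Fin n → ℤ} (hb : IsRealRoot b) (a : Fin n → ℤ) :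
    act (sref b) a = a - pairing a b • b := by
  obtain ⟨p, q, hpq, hf⟩ := hb.exists_finPart_eq hn
  refine eq_of_finPart_eq ?_ ?_
  · rw [finPart_act, sref_w hpq hf, Equiv.swap_inv, finPart_sub, finPart_smul, hf,
      pairing_single_sub_single hn hf]
    ext j
    by_cases hjp : j = p
    · subst hjp; simp [hpq]
    · by_cases hjq : j = q
      · subst hjq; simp [hpq.symm]
      · simp [Equiv.swap_apply_of_ne_of_ne hjp hjq, hjp, hjq]
  · have hst : ∑ i, (sref b).t i * finPart a i = coeff0 b * pairing a b := by
      simp only [sref, pairing_comm hn a b, pairing_eq_sum_finPart hn, Finset.mul_sum, mul_assoc]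
    rw [coeff0_act (by omega), hst, coeff0_sub, coeff0_smul, mul_comm]

lemma sum_t_mul (x y : Aff n) : ∑ i, (x * y).t i = ∑ i, x.t i + ∑ i, y.t i := by
  simp only [mul_t, Finset.sum_add_distrib, Equiv.sum_comp y.w x.t]

lemma sum_t_sref (b : Fin n → ℤ) : ∑ i, (sref b).t i = 0 := by
  simp only [sref, ← Finset.mul_sum, sum_finPart, mul_zero]

/-- `W_aff` acts faithfully on the affine root lattice; the translation parts are only seen up to
a multiple of `ε_1 + ⋯ + ε_n`, which is pinned down by their coordinate sums. -/
lemma eq_of_act_eq (hn : 2 ≤ n) {x y : Aff n} (h : ∀ a, act x a = act y a)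
    (ht : ∑ i, x.t i = ∑ i, y.t i) : x = y := by
  have key : ∀ ξ : Fin n → ℤ, ∑ i, ξ i = 0 →
      (∀ j, ξ (x.w⁻¹ j) = ξ (y.w⁻¹ j)) ∧ ∑ i, x.t i * ξ i = ∑ i, y.t i * ξ i := by
    intro ξ hξ
    have hxy := h (ofFinPart ξ 0)
    have hf := congrArg finPart hxy
    have hc := congrArg coeff0 hxy
    rw [finPart_act, finPart_act, finPart_ofFinPart hξ] at hf
    rw [coeff0_act (by omega), coeff0_act (by omega), finPart_ofFinPart hξ] at hc
    exact ⟨congrFun hf, by linarith⟩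
  have hsum : ∀ i j : Fin n, ∑ k, (Pi.single i 1 - Pi.single j 1 : Fin n → ℤ) k = 0 := by
    intro i j; simp [Finset.sum_sub_distrib]
  have hw : x.w⁻¹ = y.w⁻¹ := by
    ext j
    have : Nontrivial (Fin n) := Fin.nontrivial_iff_two_le.mpr (by omega)
    obtain ⟨k, hk⟩ := exists_ne (x.w⁻¹ j)
    have := (key _ (hsum (x.w⁻¹ j) k)).1 j
    simp only [Pi.sub_apply, Pi.single_apply, if_pos, if_neg hk.symm] at this
    split_ifs at this <;> omega
  have hd : ∀ i j, x.t i - y.t i = x.t j - y.t j := by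
    intro i j
    have := (key _ (hsum i j)).2
    simp only [Pi.sub_apply, mul_sub, Finset.sum_sub_distrib, Pi.single_apply, mul_ite, mul_one,
      mul_zero, Finset.sum_ite_eq', Finset.mem_univ, if_true] at this
    linarith
  refine Aff.ext (inv_injective hw) (funext fun j => ?_)
  have : ∑ i, (x.t i - y.t i) = n * (x.t j - y.t j) := by simp [hd _ j, mul_sub]
  rw [Finset.sum_sub_distrib, ht, sub_self] at this
  have := (mul_eq_zero.mp this.symm).resolve_left (Int.natCast_ne_zero.mpr (by omega))
  linarith

lemma sref_mul_self (hn : 3 ≤ n) {b : Fin n → ℤ} (hb : IsRealRoot b) : sref b * sref b = 1 := by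
  refine eq_of_act_eq (by omega) (fun a => ?_) 
    (by simp only [sum_t_mul, sum_t_sref, one_t, Finset.sum_const_zero, add_zero])
  have hb' : pairing b b = 2 := hb
  rw [act_mul (by omega), act_sref hn hb, act_sref hn hb, act_one (by omega), pairing_sub_left,
    pairing_smul_left, hb']
  module

lemma commute_sref (hn : 3 ≤ n) {x z : Fin n → ℤ} (hx : IsRealRoot x) (hz : IsRealRoot z)
    (h : pairing x z = 0) : Commute (sref x) (sref z) := by
  refine eq_of_act_eq (by omega) (fun a => ?_) (by simp only [sum_t_mul, sum_t_sref])
  have h' : pairing z x = 0 := pairing_comm hn z x ▸ h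
  simp only [act_mul (by omega : 0 < n), act_sref hn hx, act_sref hn hz, pairing_sub_left,
    pairing_smul_left, h, h']
  module

lemma isRealRoot_add (hn : 3 ≤ n) {x z : Fin n → ℤ} (hx : IsRealRoot x) (hz : IsRealRoot z)
    (h : pairing x z = -1) : IsRealRoot (x + z) := by
  have h' : pairing z x = -1 := pairing_comm hn z x ▸ h
  have hx' : pairing x x = 2 := hx
  have hz' : pairing z z = 2 := hz
  show pairing (x + z) (x + z) = 2
  rw [pairing_add_left, pairing_add_right, pairing_add_right, hx', hz', h, h']
  norm_num

/-- `s_x s_z s_x = s_{s_x z}`, and `s_x z = x + z` for adjacent roots. -/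
lemma sref_mul_sref_mul_sref (hn : 3 ≤ n) {x z : Fin n → ℤ} (hx : IsRealRoot x)
    (hz : IsRealRoot z) (h : pairing x z = -1) : sref x * sref z * sref x = sref (x + z) := by
  refine eq_of_act_eq (by omega) (fun a => ?_) (by simp only [sum_t_mul, sum_t_sref, add_zero])
  have h' : pairing z x = -1 := pairing_comm hn z x ▸ h
  have hx' : pairing x x = 2 := hx
  simp only [act_mul (by omega : 0 < n), act_sref hn hx, act_sref hn hz,
    act_sref hn (isRealRoot_add hn hx hz h), pairing_sub_left, pairing_smul_left,
    pairing_add_right, h, h', hx']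
  module

/-! ### Positive roots below `δ` -/

lemma lt_or_coeff0_pos {γ : Fin n → ℤ} (hγ : 0 ≤ γ) {p q : Fin n} (hpq : p ≠ q)
    (hf : finPart γ = Pi.single p 1 - Pi.single q 1) : p < q ∨ 0 < coeff0 γ := by
  refine (lt_or_gt_of_ne hpq).imp_right fun hqp => ?_
  have hq1 : q.val + 1 < n := by have := p.isLt; rw [Fin.lt_def] at hqp; omega
  have h := hγ (fsucc q)
  rw [← ofFinPart_finPart (by omega) γ, hf] at h
  simp only [ofFinPart, Pi.zero_apply, Pi.sub_apply, Finset.sum_sub_distrib,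
    Finset.sum_pi_single', Finset.mem_Iio, fsucc_val, Fin.lt_def] at h
  split_ifs at h <;> omega

lemma IsPosRoot.nonneg {b : Fin n → ℤ} (hb : IsPosRoot b) : 0 ≤ b := hb.2

lemma eq_zero_or_eq_one {v : Fin n → ℤ} (h0 : 0 ≤ v) (hc : v ≤ cvec n) (i : Fin n) :
    v i = 0 ∨ v i = 1 := by
  have := h0 i; have := hc i; simp only [Pi.zero_apply, cvec] at *; omega

lemma exists_eq_zero_of_lt_cvec {v : Fin n → ℤ} (h0 : 0 ≤ v) (hc : v < cvec n) :
    ∃ i, v i = 0 := by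
  obtain ⟨i, hi⟩ := Pi.lt_def.mp hc |>.2
  exact ⟨i, by have := h0 i; simp only [Pi.zero_apply, cvec] at *; omega⟩

lemma two_le_pairing_self (hn : 3 ≤ n) {v : Fin n → ℤ} (h0 : 0 ≤ v) (hc : v < cvec n)
    (hv : v ≠ 0) : 2 ≤ pairing v v := by
  rw [pairing_eq_sum_finPart hn]
  refine two_le_sum_mul_self (sum_finPart v) fun hf => hv ?_
  obtain ⟨i, hi⟩ := exists_eq_zero_of_lt_cvec h0 hc
  have hconst : v = coeff0 v • cvec n :=
    eq_of_finPart_eq (by rw [hf, finPart_smul, finPart_cvec, smul_zero])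
      (by rw [coeff0_smul, coeff0_eq (by omega) (cvec n)]; simp [cvec])
  have h := congrFun hconst i
  simp only [hi, Pi.smul_apply, cvec, smul_eq_mul, mul_one] at h
  rw [hconst, ← h, zero_smul]

lemma pairing_eq_neg_one (hn : 3 ≤ n) {x z : Fin n → ℤ} (hx : IsPosRoot x) (hz : IsPosRoot z)
    (hc : x + z < cvec n) (h : pairing x z ≠ 0) : pairing x z = -1 := by
  have hle := pairing_nonpos hn hx.nonneg hz.nonneg hc.le
  have hxz : x + z ≠ 0 := fun h0 => hx.1.ne_zero <| le_antisymm
    (fun i => by have := congrFun h0 i; have := hz.nonneg i; simp only [Pi.add_apply,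
      Pi.zero_apply] at *; omega) hx.nonneg
  have h2 := two_le_pairing_self hn (add_nonneg hx.nonneg hz.nonneg) hc hxz
  have hx' : pairing x x = 2 := hx.1
  have hz' : pairing z z = 2 := hz.1
  rw [pairing_add_left, pairing_add_right, pairing_add_right, pairing_comm hn z x, hx', hz'] at h2
  omega

lemma isPosRoot_add (hn : 3 ≤ n) {x z : Fin n → ℤ} (hx : IsPosRoot x) (hz : IsPosRoot z)
    (h : pairing x z = -1) : IsPosRoot (x + z) :=
  ⟨isRealRoot_add hn hx.1 hz.1 h, fun i => add_nonneg (hx.2 i) (hz.2 i)⟩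

lemma isPosRoot_single (hn : 3 ≤ n) (i : Fin n) : IsPosRoot (Pi.single i 1) := by
  refine ⟨?_, fun j => (Pi.single_nonneg.mpr zero_le_one : (0 : Fin n → ℤ) ≤ Pi.single i 1) j⟩
  have h0 : ∀ j, (if fsucc j = i then (if j = i then (1 : ℤ) else 0) else 0) = 0 := fun j => by
    split_ifs with h1 h2
    · subst h2; exact absurd h1 (fsucc_ne hn j)
    all_goals rfl
  simp [IsRealRoot, pairing_eq_sum hn, Pi.single_apply, Finset.sum_sub_distrib, fsucc_ne hn i, h0]

/-- A positive root `b < δ` is the indicator vector of a proper cyclic interval, here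
`[p + 1, q]` with `α₀ ∈ [p + 1, q]` exactly when `q < p`. -/
lemma coeff0_of_lt_cvec {b : Fin n → ℤ} (hb : IsPosRoot b) (hbc : b < cvec n) {p q : Fin n}
    (hpq : p ≠ q) (hf : finPart b = Pi.single p 1 - Pi.single q 1) :
    (coeff0 b = 0 ∧ p < q) ∨ (coeff0 b = 1 ∧ q < p) := by
  have hn : 0 < n := p.pos
  have h01 := eq_zero_or_eq_one hb.nonneg hbc.le ⟨0, hn⟩
  have hlo := lt_or_coeff0_pos hb.nonneg hpq hf
  have hhi := lt_or_coeff0_pos (γ := cvec n - b) (sub_nonneg.mpr hbc.le) hpq.symm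
    (by rw [finPart_sub, finPart_cvec, hf]; abel)
  rw [coeff0_sub, coeff0_eq hn (cvec n)] at hhi
  rw [coeff0_eq hn] at hlo hhi ⊢
  simp only [cvec] at hhi
  omega

lemma pairing_eq_neg_add_of_add_le_cvec (hn : 3 ≤ n) {x ξ : Fin n → ℤ} (hx : 0 ≤ x) (hξ : 0 ≤ ξ)
    (hc : x + ξ ≤ cvec n) {p q : Fin n} (hpq : p ≠ q)
    (hf : finPart x = Pi.single p 1 - Pi.single q 1) : pairing ξ x = -(ξ p + ξ (fsucc q)) := by
  have hp := congrFun hf p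
  have hq := congrFun hf q
  simp only [finPart, Pi.sub_apply, Pi.single_apply, if_pos, if_neg hpq, if_neg hpq.symm] at hp hq
  have := disjoint_of_add_le_cvec hx hξ hc (fsucc p)
  have := disjoint_of_add_le_cvec hx hξ hc q
  have := hx p; have := hx (fsucc q)
  rw [pairing_single_sub_single hn hf]
  simp only [finPart, Pi.zero_apply] at *
  omega

/-- Inside a root `< δ`, a root has at most two neighbours among roots with disjoint supports,
one at each end. -/
lemma pairing_eq_zero_of_two_adjacent (hn : 3 ≤ n) {x y₁ y₂ y₃ : Fin n → ℤ} (hx : IsRealRoot x)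
    (hx0 : 0 ≤ x) (h₁ : 0 ≤ y₁) (h₂ : 0 ≤ y₂) (h₃ : 0 ≤ y₃) (hc : x + y₁ + y₂ + y₃ ≤ cvec n)
    (hy₁ : pairing y₁ x ≠ 0) (hy₂ : pairing y₂ x ≠ 0) : pairing y₃ x = 0 := by
  obtain ⟨p, q, hpq, hf⟩ := hx.exists_finPart_eq hn
  have hle : ∀ y : Fin n → ℤ, 0 ≤ y → y ≤ y₁ + y₂ + y₃ → x + y ≤ cvec n := fun y _ hy i => by
    have := hc i; have := hy i; simp only [Pi.add_apply, cvec] at *; omega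
  rw [pairing_eq_neg_add_of_add_le_cvec hn hx0 h₁ (hle y₁ h₁ fun i => ?_) hpq hf] at hy₁
  rw [pairing_eq_neg_add_of_add_le_cvec hn hx0 h₂ (hle y₂ h₂ fun i => ?_) hpq hf] at hy₂
  rw [pairing_eq_neg_add_of_add_le_cvec hn hx0 h₃ (hle y₃ h₃ fun i => ?_) hpq hf]
  · have hcp := hc p; have hcq := hc (fsucc q)
    have := hx0 p; have := hx0 (fsucc q)
    have := h₁ p; have := h₁ (fsucc q); have := h₂ p; have := h₂ (fsucc q)
    have := h₃ p; have := h₃ (fsucc q)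
    simp only [Pi.add_apply, Pi.zero_apply, cvec] at *
    omega
  all_goals
    have := h₁ i; have := h₂ i; have := h₃ i
    simp only [Pi.add_apply, Pi.zero_apply] at *
    omega

/-! ### Reflections raising the length -/

/-- The summand of the Iwahori–Matsumoto formula at the root `ε_u - ε_v`. -/
def lenTerm (x : Aff n) (u v : Fin n) : ℤ := (if x.w v < x.w u then 1 else 0) + x.t u - x.t v

lemma len_eq_sum (x : Aff n) :
    (len x : ℤ) = ∑ u, ∑ v, if u < v then |lenTerm x u v| else 0 := by
  simp only [len, lenTerm, Nat.cast_sum, Nat.cast_ite, Int.natCast_natAbs, Nat.cast_zero,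
    add_sub_assoc]

lemma lenTerm_swap (x : Aff n) {u v : Fin n} (h : u ≠ v) : lenTerm x v u = 1 - lenTerm x u v := by
  have : x.w u ≠ x.w v := x.w.injective.ne h
  unfold lenTerm
  rcases this.lt_or_gt with h' | h'
  · simp only [h', h'.not_gt, ↓reduceIte, zero_add]; ring
  · simp only [h', h'.not_gt, ↓reduceIte, zero_add]; ring

lemma lenTerm_le_add (x : Aff n) (a p q : Fin n) :
    lenTerm x a q ≤ lenTerm x a p + lenTerm x p q := by
  unfold lenTerm
  have : x.w q < x.w a → x.w p < x.w a ∨ x.w q < x.w p := fun h =>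
    (lt_or_ge (x.w q) (x.w p)).symm.imp (fun h' => h'.trans_lt h) id
  split_ifs <;> simp_all <;> omega

/-- The element `s_{ε_p - ε_q} t_{m(ε_p - ε_q)}`; every reflection `sref b` has this shape. -/
def swapRefl (p q : Fin n) (m : ℤ) : Aff n :=
  ⟨Equiv.swap p q, fun i => m * (Pi.single p 1 - Pi.single q 1 : Fin n → ℤ) i⟩

lemma single_sub_single_swap (p q u : Fin n) :
    (Pi.single p 1 - Pi.single q 1 : Fin n → ℤ) (Equiv.swap p q u)
      = -(Pi.single p 1 - Pi.single q 1 : Fin n → ℤ) u := by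
  rcases eq_or_ne u p with rfl | hup
  · rcases eq_or_ne u q with rfl | huq <;> simp [*]
  rcases eq_or_ne u q with rfl | huq
  · simp [hup]
  · simp [Equiv.swap_apply_of_ne_of_ne hup huq, hup, huq]

lemma lenTerm_mul_swapRefl (x : Aff n) (p q : Fin n) (m : ℤ) (u v : Fin n) :
    lenTerm (x * swapRefl p q m) (Equiv.swap p q u) (Equiv.swap p q v)
      = lenTerm x u v - m * ((Pi.single p 1 - Pi.single q 1 : Fin n → ℤ) u
        - (Pi.single p 1 - Pi.single q 1 : Fin n → ℤ) v) := by
  simp only [swapRefl, lenTerm, mul_w, mul_t, Equiv.Perm.mul_apply, Equiv.swap_apply_self,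
    single_sub_single_swap]
  ring

/-- The change of the `(u, v)`-summand of the length formula under `x ↦ x * swapRefl p q m`,
the new summands being reindexed by the swap. -/
def lenDelta (x : Aff n) (p q : Fin n) (m : ℤ) (u v : Fin n) : ℤ :=
  (if Equiv.swap p q u < Equiv.swap p q v then
      |lenTerm x u v - m * ((Pi.single p 1 - Pi.single q 1 : Fin n → ℤ) u
        - (Pi.single p 1 - Pi.single q 1 : Fin n → ℤ) v)| else 0)
    - (if u < v then |lenTerm x u v| else 0)

lemma len_mul_swapRefl_sub_len (x : Aff n) (p q : Fin n) (m : ℤ) :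
    (len (x * swapRefl p q m) : ℤ) - len x = ∑ u, ∑ v, lenDelta x p q m u v := by
  rw [len_eq_sum, len_eq_sum, ← Equiv.sum_comp (Equiv.swap p q), ← Finset.sum_sub_distrib]
  refine Finset.sum_congr rfl fun u _ => ?_
  rw [← Equiv.sum_comp (Equiv.swap p q), ← Finset.sum_sub_distrib]
  simp only [lenTerm_mul_swapRefl, lenDelta]

lemma lenDelta_self (x : Aff n) (p q : Fin n) (m : ℤ) (u : Fin n) : lenDelta x p q m u u = 0 := by
  simp [lenDelta]

lemma lenDelta_eq_zero (x : Aff n) {p q : Fin n} (m : ℤ) {u v : Fin n} (hup : u ≠ p)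
    (huq : u ≠ q) (hvp : v ≠ p) (hvq : v ≠ q) : lenDelta x p q m u v = 0 := by
  simp [lenDelta, Equiv.swap_apply_of_ne_of_ne, *]

lemma one_le_lenDelta_add (x : Aff n) {p q : Fin n} {m : ℤ}
    (hm : (m = 0 ∧ p < q) ∨ (m = 1 ∧ q < p)) (hC : lenTerm x p q ≤ m) :
    1 ≤ lenDelta x p q m p q + lenDelta x p q m q p := by
  have hpq : p ≠ q := by rcases hm with ⟨-, h⟩ | ⟨-, h⟩; exacts [h.ne, h.ne']
  simp only [lenDelta, Pi.sub_apply, Equiv.swap_apply_left, Equiv.swap_apply_right,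
    Pi.single_eq_same, Pi.single_eq_of_ne hpq, Pi.single_eq_of_ne hpq.symm, sub_zero, zero_sub,
    sub_neg_eq_add, lenTerm_swap x hpq]
  simp only [abs_eq_max_neg]
  rcases hm with ⟨rfl, h⟩ | ⟨rfl, h⟩ <;> simp only [h, h.not_gt, if_true, if_false] <;> omega

/-- With `A = lenTerm x a p` and `B = lenTerm x a q`, the hypotheses give `B ≤ A + m`; in each
relative position of `a`, `p`, `q` the claim is then the monotonicity of `c ↦ |c| - |c - 1|`. -/
lemma lenDelta_add_nonneg (x : Aff n) {p q : Fin n} {m : ℤ}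
    (hm : (m = 0 ∧ p < q) ∨ (m = 1 ∧ q < p)) (hC : lenTerm x p q ≤ m) {a : Fin n}
    (hap : a ≠ p) (haq : a ≠ q) :
    0 ≤ lenDelta x p q m a p + lenDelta x p q m a q + lenDelta x p q m p a
      + lenDelta x p q m q a := by
  have hpq : p ≠ q := by rcases hm with ⟨-, h⟩ | ⟨-, h⟩; exacts [h.ne, h.ne']
  have hB : lenTerm x a q ≤ lenTerm x a p + m := (lenTerm_le_add x a p q).trans (by omega)
  simp only [lenDelta, Pi.sub_apply, Equiv.swap_apply_of_ne_of_ne hap haq, Equiv.swap_apply_left,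
    Equiv.swap_apply_right, Pi.single_eq_same, Pi.single_eq_of_ne hap, Pi.single_eq_of_ne haq,
    Pi.single_eq_of_ne hpq, Pi.single_eq_of_ne hpq.symm, sub_self, sub_zero, zero_sub, zero_add,
    mul_neg, mul_one, sub_neg_eq_add, lenTerm_swap x hap, lenTerm_swap x haq]
  generalize lenTerm x a p = A at *
  generalize lenTerm x a q = B at *
  simp only [abs_eq_max_neg]
  rcases hm with ⟨rfl, h⟩ | ⟨rfl, h⟩ <;> split_ifs <;> omega

lemma len_lt_mul_swapRefl (x : Aff n) {p q : Fin n} {m : ℤ}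
    (hm : (m = 0 ∧ p < q) ∨ (m = 1 ∧ q < p)) (hC : lenTerm x p q ≤ m) :
    len x < len (x * swapRefl p q m) := by
  have hpq : p ≠ q := by rcases hm with ⟨-, h⟩ | ⟨-, h⟩; exacts [h.ne, h.ne']
  have h := len_mul_swapRefl_sub_len x p q m
  rw [Finset.sum_sum_eq_of_eq_zero hpq fun u v => lenDelta_eq_zero x m, lenDelta_self,
    lenDelta_self] at h
  have := one_le_lenDelta_add x hm hC
  have : 0 ≤ ∑ a ∈ ({p, q} : Finset (Fin n))ᶜ, (lenDelta x p q m a p + lenDelta x p q m a q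
      + lenDelta x p q m p a + lenDelta x p q m q a) := Finset.sum_nonneg fun a ha => by
    simp only [Finset.mem_compl, Finset.mem_insert, Finset.mem_singleton, not_or] at ha
    exact lenDelta_add_nonneg x hm hC ha.1 ha.2
  omega

lemma len_lt_mul_sref (hn : 3 ≤ n) {b : Fin n → ℤ} (hb : IsPosRoot b) (hbc : b < cvec n)
    {x : Aff n} (hx : 0 ≤ act x b) : len x < len (x * sref b) := by
  obtain ⟨p, q, hpq, hf⟩ := hb.1.exists_finPart_eq hn
  rw [show sref b = swapRefl p q (coeff0 b) from
    Aff.ext (sref_w hpq hf) (by rw [swapRefl, ← hf]; rfl)]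
  refine len_lt_mul_swapRefl x (coeff0_of_lt_cvec hb hbc hpq hf) ?_
  have hfx : finPart (act x b) = Pi.single (x.w p) 1 - Pi.single (x.w q) 1 := by
    ext j
    simp [finPart_act, hf, Pi.single_apply, Equiv.symm_apply_eq]
  have hcx : coeff0 (act x b) = coeff0 b - (x.t p - x.t q) := by
    simp [coeff0_act p.pos, hf, mul_sub, Finset.sum_sub_distrib, Pi.single_apply]
  have h1 := lt_or_coeff0_pos hx (x.w.injective.ne hpq) hfx
  have h2 : 0 ≤ coeff0 (act x b) := by rw [coeff0_eq p.pos]; exact hx _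
  -- `0 ≤ x b` amounts to `lenTerm x p q ≤ coeff0 b`
  unfold lenTerm
  split_ifs at * <;> omega

/-! ### Products of reflections in disjoint roots -/

lemma sum_lt_cvec_of_sublist {l₁ l₂ : List (Fin n → ℤ)} (h : l₁.Sublist l₂)
    (hl : ∀ b ∈ l₂, IsPosRoot b) (hc : l₂.sum < cvec n) : l₁.sum < cvec n :=
  lt_of_le_of_lt (h.sum_le_sum fun b hb => (hl b hb).nonneg) hc

lemma act_prod_eq_self (hn : 3 ≤ n) {l : List (Fin n → ℤ)} (hl : ∀ b ∈ l, IsRealRoot b)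
    {γ : Fin n → ℤ} (hγ : ∀ b ∈ l, pairing γ b = 0) : act (l.map sref).prod γ = γ := by
  induction l with
  | nil => exact act_one (by omega) γ
  | cons b l ih =>
    simp only [List.map_cons, List.prod_cons, act_mul (by omega : 0 < n)]
    rw [ih (fun c hc => hl c (.tail _ hc)) (fun c hc => hγ c (.tail _ hc)),
      act_sref hn (hl b (.head _)), hγ b (.head _), zero_smul, sub_zero]

/-- Reflections in roots with pairwise disjoint supports can only add to a vector `γ ≥ 0`
supported away from them. -/
lemma le_act_prod (hn : 3 ≤ n) {l : List (Fin n → ℤ)} (hl : ∀ b ∈ l, IsPosRoot b)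
    {γ : Fin n → ℤ} (hγ : 0 ≤ γ) (hc : l.sum + γ < cvec n) : γ ≤ act (l.map sref).prod γ := by
  induction l using List.reverseRecOn generalizing γ with
  | nil => simp [act_one (by omega : 0 < n)]
  | append_singleton l b ih =>
    have hl' : ∀ c ∈ l, IsPosRoot c := fun c hc => hl c (by simp [hc])
    have hb : IsPosRoot b := hl b (by simp)
    have hl0 : 0 ≤ l.sum := List.sum_nonneg fun c hc => (hl' c hc).nonneg
    rw [List.sum_append, List.sum_singleton] at hc
    have h0 : ∀ i, 0 ≤ l.sum i ∧ 0 ≤ b i ∧ 0 ≤ γ i := fun i => ⟨hl0 i, hb.nonneg i, hγ i⟩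
    have hγb : pairing γ b ≤ 0 := pairing_nonpos hn hγ hb.nonneg <| le_of_lt <| lt_of_le_of_lt
      (fun i => by have := h0 i; simp only [Pi.add_apply]; linarith) hc
    have ihγ := ih hl' hγ <| lt_of_le_of_lt
      (fun i => by have := h0 i; simp only [Pi.add_apply]; linarith) hc
    have ihb := ih hl' hb.nonneg <| lt_of_le_of_lt
      (fun i => by have := h0 i; simp only [Pi.add_apply]; linarith) hc
    simp only [List.map_append, List.map_singleton, List.prod_append, List.prod_singleton,
      act_mul (by omega : 0 < n), act_sref hn hb.1, map_sub, map_zsmul]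
    intro i
    have := ihγ i; have := ihb i; have := h0 i
    simp only [Pi.sub_apply, Pi.smul_apply, smul_eq_mul]
    nlinarith

lemma commute_sref_prod (hn : 3 ≤ n) {x : Fin n → ℤ} (hx : IsRealRoot x)
    {l : List (Fin n → ℤ)} (hl : ∀ b ∈ l, IsRealRoot b) (h : ∀ b ∈ l, pairing x b = 0) :
    Commute (sref x) (l.map sref).prod :=
  Commute.list_prod_right _ _ fun _ hb =>
    let ⟨b, hb, e⟩ := List.mem_map.mp hb
    e ▸ commute_sref hn hx (hl b hb) (h b hb)

lemma bstep_of_isPosRoot (hn : 3 ≤ n) {u : Aff n} {b : Fin n → ℤ} (hb : IsPosRoot b)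
    (hbc : b < cvec n) (hu : 0 ≤ act u b) : bstep u (u * sref b) :=
  ⟨⟨b, hb, rfl⟩, len_lt_mul_sref hn hb hbc hu⟩

lemma braid_merge_last (hn : 3 ≤ n) {x z : Fin n → ℤ} (hx : IsRealRoot x) (hz : IsRealRoot z)
    (hxz : pairing x z = -1) {P : Aff n} (hPx : Commute (sref x) P) (hPz : Commute (sref z) P) :
    sref x * (P * (sref z * sref x)) = sref (x + z) * P := by
  rw [← sref_mul_sref_mul_sref hn hx hz hxz]
  simp only [mul_assoc, hPz.symm.left_comm, hPx.symm.eq]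

lemma braid_merge_inner (hn : 3 ≤ n) {x ξ z : Fin n → ℤ} (hx : IsRealRoot x) (hξ : IsRealRoot ξ)
    (hz : IsRealRoot z) (hxz : pairing x z = -1) (hxξ : pairing x ξ = -1) {P₁ P₂ : Aff n}
    (hP₁ : Commute (sref x) P₁) (hP₂ : Commute (sref x) P₂) :
    sref x * (P₁ * (sref ξ * (P₂ * (sref z * sref (x + z)))))
      = P₁ * (sref (x + ξ) * (P₂ * sref z)) := by
  have h₁ : sref z * sref (x + z) = sref x * sref z := by
    rw [add_comm, ← sref_mul_sref_mul_sref hn hz hx (pairing_comm hn z x ▸ hxz), ← mul_assoc,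
      ← mul_assoc, sref_mul_self hn hz, one_mul]
  have h₂ : ∀ r, sref ξ * (sref x * r) = sref x * (sref (x + ξ) * r) := fun r => by
    rw [← sref_mul_sref_mul_sref hn hx hξ hxξ, ← mul_assoc, ← mul_assoc, ← mul_assoc,
      ← mul_assoc, sref_mul_self hn hx, one_mul]
  have hsq : ∀ r, sref x * (sref x * r) = r := fun r => by
    rw [← mul_assoc, sref_mul_self hn hx, one_mul]
  simp only [h₁, hP₂.symm.left_comm, h₂, hP₁.symm.left_comm, hsq]

/-- Merging the last root `z` into its last neighbour `x`, when no root in between touches `x`. -/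
lemma bstep_merge_last (hn : 3 ≤ n) {U X : List (Fin n → ℤ)} {x z : Fin n → ℤ}
    (hl : ∀ b ∈ U ++ x :: X ++ [z], IsPosRoot b) (hc : (U ++ x :: X ++ [z]).sum < cvec n)
    (hxz : pairing x z = -1) (hXx : ∀ ζ ∈ X, pairing x ζ = 0) (hXz : ∀ ζ ∈ X, pairing z ζ = 0) :
    bstep ((U ++ x :: X ++ [z]).map sref).prod ((U ++ (x + z) :: X).map sref).prod := by
  have hx : IsPosRoot x := hl x (by simp)
  have hz : IsPosRoot z := hl z (by simp)
  have hX : ∀ ζ ∈ X, IsRealRoot ζ := fun ζ hζ => (hl ζ (by simp [hζ])).1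
  have hU : ∀ ζ ∈ U, IsPosRoot ζ := fun ζ hζ => hl ζ (by simp [hζ])
  have hgrp : ((U ++ x :: X ++ [z]).map sref).prod * sref x
      = ((U ++ (x + z) :: X).map sref).prod := by
    simp only [List.map_append, List.map_cons, List.map_nil, List.prod_append, List.prod_cons,
      List.prod_nil, mul_one, mul_assoc, braid_merge_last hn hx.1 hz.1 hxz
        (commute_sref_prod hn hx.1 hX hXx) (commute_sref_prod hn hz.1 hX hXz)]
  have hxc : x < cvec n := by simpa using sum_lt_cvec_of_sublist (l₁ := [x]) (by simp) hl hc
  have hUz : U.sum + z < cvec n := by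
    simpa using sum_lt_cvec_of_sublist (l₁ := U ++ [z]) (by simp) hl hc
  have hpos : 0 ≤ act ((U ++ x :: X ++ [z]).map sref).prod x := by
    have e1 : act (sref z) x = x + z := by rw [act_sref hn hz.1, hxz]; module
    have e2 : act (X.map sref).prod (x + z) = x + z := act_prod_eq_self hn hX fun ζ hζ => by
      rw [pairing_add_left, hXx ζ hζ, hXz ζ hζ, add_zero]
    have e3 : act (sref x) (x + z) = z := by
      have hx' : pairing x x = 2 := hx.1
      rw [act_sref hn hx.1, pairing_add_left, pairing_comm hn z x, hxz, hx']; module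
    simp only [List.map_append, List.map_cons, List.map_nil, List.prod_append, List.prod_cons,
      List.prod_nil, mul_one, act_mul (by omega : 0 < n), e1, e2, e3]
    exact hz.nonneg.trans (le_act_prod hn hU hz.nonneg hUz)
  rw [← hgrp]
  exact bstep_of_isPosRoot hn hx hxc hpos

/-- Merging the last root `z` into its last neighbour `x`, when `ξ` is the last root between them
touching `x`; the product goes up by `s_{x+z}`, and `x` is merged into `ξ` instead. -/
lemma bstep_merge_inner (hn : 3 ≤ n) {U X₁ X₂ : List (Fin n → ℤ)} {x ξ z : Fin n → ℤ}
    (hl : ∀ b ∈ U ++ x :: (X₁ ++ ξ :: X₂) ++ [z], IsPosRoot b)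
    (hc : (U ++ x :: (X₁ ++ ξ :: X₂) ++ [z]).sum < cvec n)
    (hxz : pairing x z = -1) (hxξ : pairing x ξ = -1)
    (hX₁ : ∀ ζ ∈ X₁, pairing x ζ = 0) (hX₂ : ∀ ζ ∈ X₂, pairing x ζ = 0) :
    bstep ((U ++ x :: (X₁ ++ ξ :: X₂) ++ [z]).map sref).prod
      ((U ++ X₁ ++ (x + ξ) :: X₂ ++ [z]).map sref).prod := by
  have hx : IsPosRoot x := hl x (by simp)
  have hξ : IsPosRoot ξ := hl ξ (by simp)
  have hz : IsPosRoot z := hl z (by simp)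
  have hX₂r : ∀ ζ ∈ X₂, IsRealRoot ζ := fun ζ hζ => (hl ζ (by simp [hζ])).1
  have hUX₁ : ∀ ζ ∈ U ++ X₁, IsPosRoot ζ := fun ζ hζ =>
    hl ζ (by simp only [List.mem_append, List.mem_cons] at hζ ⊢; tauto)
  have hc₁ := commute_sref_prod hn hx.1 (fun ζ hζ => (hl ζ (by simp [hζ])).1) hX₁
  have hgrp : ((U ++ x :: (X₁ ++ ξ :: X₂) ++ [z]).map sref).prod * sref (x + z)
      = ((U ++ X₁ ++ (x + ξ) :: X₂ ++ [z]).map sref).prod := by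
    simp only [List.map_append, List.map_cons, List.map_nil, List.prod_append, List.prod_cons,
      List.prod_nil, mul_one, mul_assoc, braid_merge_inner hn hx.1 hξ.1 hz.1 hxz hxξ hc₁
        (commute_sref_prod hn hx.1 hX₂r hX₂)]
  have hxzc : x + z < cvec n := by
    simpa using sum_lt_cvec_of_sublist (l₁ := [x, z]) (by simp) hl hc
  have hUξ : (U ++ X₁).sum + ξ < cvec n := by
    simpa [add_assoc] using sum_lt_cvec_of_sublist (l₁ := U ++ X₁ ++ [ξ]) (by simp) hl hc
  have hpos : 0 ≤ act ((U ++ x :: (X₁ ++ ξ :: X₂) ++ [z]).map sref).prod (x + z) := by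
    have hx' : pairing x x = 2 := hx.1
    have hz' : pairing z z = 2 := hz.1
    have e1 : act (sref z) (x + z) = x := by
      rw [act_sref hn hz.1, pairing_add_left, hxz, hz']; module
    have e2 : act (X₂.map sref).prod x = x := act_prod_eq_self hn hX₂r hX₂
    have e3 : act (sref ξ) x = x + ξ := by rw [act_sref hn hξ.1, hxξ]; module
    have e4 : act (sref x) (x + ξ) = ξ := by
      rw [act_sref hn hx.1, pairing_add_left, hx', pairing_comm hn ξ x, hxξ]; module
    have hprod : ((U ++ x :: (X₁ ++ ξ :: X₂) ++ [z]).map sref).prod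
        = ((U ++ X₁).map sref).prod * (sref x * (sref ξ * ((X₂.map sref).prod * sref z))) := by
      simp only [List.map_append, List.map_cons, List.map_nil, List.prod_append, List.prod_cons,
        List.prod_nil, mul_one, mul_assoc, hc₁.left_comm]
    simp only [hprod, act_mul (by omega : 0 < n), e1, e2, e3, e4]
    exact hξ.nonneg.trans (le_act_prod hn hUX₁ hξ.nonneg hUξ)
  rw [← hgrp]
  exact bstep_of_isPosRoot hn (isPosRoot_add hn hx hz hxz) hxzc hpos

/-- If the roots of `l ++ [z]` have disjoint supports and add up to a root `< δ`, then `z` has a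
neighbour in `l`: otherwise the sum would split into two orthogonal parts. -/
lemma exists_pairing_ne_zero (hn : 3 ≤ n) {l : List (Fin n → ℤ)} {z : Fin n → ℤ}
    (hl : ∀ b ∈ l ++ [z], IsPosRoot b) (hs : IsRealRoot (l ++ [z]).sum)
    (hc : (l ++ [z]).sum < cvec n) (hne : l ≠ []) : ∃ b ∈ l, pairing b z ≠ 0 := by
  by_contra! h
  have hz : IsPosRoot z := hl z (by simp)
  have hlz : pairing l.sum z = 0 := by
    rw [pairing_list_sum_left]
    exact List.sum_eq_zero fun c hc => by
      obtain ⟨b, hb, rfl⟩ := List.mem_map.mp hc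
      exact h b hb
  have hl0 : 0 ≤ l.sum := List.sum_nonneg fun b hb => (hl b (by simp [hb])).nonneg
  have hlc : l.sum < cvec n := by simpa using sum_lt_cvec_of_sublist (l₁ := l) (by simp) hl hc
  have hl_ne : l.sum ≠ 0 := by
    obtain ⟨b, hb⟩ := List.exists_mem_of_ne_nil l hne
    have hb' := hl b (by simp [hb])
    intro h0
    exact hb'.1.ne_zero (le_antisymm (h0 ▸ List.single_le_sum
      (fun c hc => (hl c (by simp [hc])).nonneg) b hb) hb'.nonneg)
  have h2 := two_le_pairing_self hn hl0 hlc hl_ne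
  have hs' : pairing (l.sum + z) (l.sum + z) = 2 := by simpa [IsRealRoot] using hs
  have hz' : pairing z z = 2 := hz.1
  rw [pairing_add_left, pairing_add_right, pairing_add_right, pairing_comm hn z, hlz, hz'] at hs'
  omega

/-- The roots strictly between `x` and its neighbour `ξ` are orthogonal to `x`, since the other
neighbour of `x` is `z`. -/
lemma pairing_eq_zero_of_mem_between (hn : 3 ≤ n) {U X₁ X₂ : List (Fin n → ℤ)}
    {x ξ z : Fin n → ℤ} (hl : ∀ b ∈ U ++ x :: (X₁ ++ ξ :: X₂) ++ [z], IsPosRoot b)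
    (hc : (U ++ x :: (X₁ ++ ξ :: X₂) ++ [z]).sum < cvec n) (hxz : pairing x z ≠ 0)
    (hξx : pairing ξ x ≠ 0) {ζ : Fin n → ℤ} (hζ : ζ ∈ X₁) : pairing x ζ = 0 := by
  have hx : IsPosRoot x := hl x (by simp)
  have hsub := (sum_lt_cvec_of_sublist (l₁ := x :: X₁ ++ [ξ, z]) (by simp) hl hc).le
  have hζX₁ := List.single_le_sum (fun b hb => (hl b (by simp [hb])).nonneg) ζ hζ
  rw [pairing_comm hn]
  refine pairing_eq_zero_of_two_adjacent hn hx.1 hx.nonneg (hl z (by simp)).nonneg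
    (hl ξ (by simp)).nonneg (hl ζ (by simp [hζ])).nonneg (fun i => ?_)
    (by rwa [pairing_comm hn]) hξx
  have := hsub i; have := hζX₁ i
  simp only [List.sum_append, List.sum_cons, List.sum_nil, Pi.add_apply, add_zero] at *
  omega

lemma isPosRoot_of_merge {l l' : List (Fin n → ℤ)} {x y : Fin n → ℤ} (hl : ∀ b ∈ l, IsPosRoot b)
    (hxy : IsPosRoot (x + y)) (h : ∀ b ∈ l', b ≠ x + y → b ∈ l) : ∀ b ∈ l', IsPosRoot b :=
  fun b hb => if hbx : b = x + y then hbx ▸ hxy else hl b (h b hb hbx)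

lemma exists_bstep_of_sum_eq (hn : 3 ≤ n) {α : Fin n → ℤ} (hα : IsPosRoot α) (hαc : α < cvec n)
    {l : List (Fin n → ℤ)} (hl : ∀ b ∈ l, IsPosRoot b) (hs : l.sum = α) (hlen : 2 ≤ l.length) :
    ∃ l' : List (Fin n → ℤ), (∀ b ∈ l', IsPosRoot b) ∧ l'.sum = α ∧ l'.length < l.length ∧
      bstep (l.map sref).prod (l'.map sref).prod := by
  obtain rfl | ⟨l₀, z, rfl⟩ := l.eq_nil_or_concat'
  · simp at hlen
  have hc : (l₀ ++ [z]).sum < cvec n := hs ▸ hαc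
  obtain ⟨U, x, X, rfl, hxz, hXz⟩ := List.exists_eq_append_cons_last (pairing · z ≠ 0)
    (exists_pairing_ne_zero hn hl (hs ▸ hα.1) hc (by rintro rfl; simp at hlen))
  simp only [not_not] at hXz
  have hx : IsPosRoot x := hl x (by simp)
  have hz : IsPosRoot z := hl z (by simp)
  have hxz' : pairing x z = -1 := pairing_eq_neg_one hn hx hz
    (by simpa using sum_lt_cvec_of_sublist (l₁ := [x, z]) (by simp) hl hc) hxz
  by_cases hadj : ∃ ζ ∈ X, pairing ζ x ≠ 0
  · obtain ⟨X₁, ξ, X₂, rfl, hξx, hX₂⟩ := List.exists_eq_append_cons_last (pairing · x ≠ 0) hadj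
    simp only [not_not] at hX₂
    have hξ : IsPosRoot ξ := hl ξ (by simp)
    have hxξ : pairing x ξ = -1 := pairing_comm hn x ξ ▸ pairing_eq_neg_one hn hξ hx
      (by simpa [add_comm] using sum_lt_cvec_of_sublist (l₁ := [x, ξ]) (by simp) hl hc) hξx
    refine ⟨U ++ X₁ ++ (x + ξ) :: X₂ ++ [z], isPosRoot_of_merge hl (isPosRoot_add hn hx hξ hxξ)
      fun b hb hbx => ?_, ?_, by simp, bstep_merge_inner hn hl hc hxz' hxξ
        (fun ζ => pairing_eq_zero_of_mem_between hn hl hc hxz hξx)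
        fun ζ hζ => pairing_comm hn x ζ ▸ hX₂ ζ hζ⟩
    · simp only [List.mem_append, List.mem_cons] at hb ⊢; tauto
    · rw [← hs]
      simp only [List.sum_append, List.sum_cons, List.sum_nil]
      abel
  · push Not at hadj
    refine ⟨U ++ (x + z) :: X, isPosRoot_of_merge hl (isPosRoot_add hn hx hz hxz')
      fun b hb hbx => ?_, ?_, by simp, bstep_merge_last hn hl hc hxz'
        (fun ζ hζ => pairing_comm hn x ζ ▸ hadj ζ hζ) fun ζ hζ => pairing_comm hn z ζ ▸ hXz ζ hζ⟩
    · simp only [List.mem_append, List.mem_cons] at hb ⊢; tauto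
    · rw [← hs]
      simp only [List.sum_append, List.sum_cons, List.sum_nil]
      abel

theorem ble_sref_of_sum_eq (hn : 3 ≤ n) {α : Fin n → ℤ} (hα : IsPosRoot α) (hαc : α < cvec n)
    {l : List (Fin n → ℤ)} (hl : ∀ b ∈ l, IsPosRoot b) (hs : l.sum = α) :
    ble (l.map sref).prod (sref α) := by
  match l, hl, hs with
  | [], _, hs => exact absurd hs.symm (by simpa using hα.1.ne_zero)
  | [b], _, hs =>
    rw [show ([b].map sref).prod = sref α by simp [← hs]]
    exact Relation.ReflTransGen.refl
  | b :: c :: l, hl, hs =>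
    obtain ⟨l', hl', hs', hlen, hstep⟩ := exists_bstep_of_sum_eq hn hα hαc hl hs (by simp)
    exact Relation.ReflTransGen.head hstep (ble_sref_of_sum_eq hn hα hαc hl' hs')
termination_by l.length
decreasing_by simp only [List.length_cons] at hlen; omega

theorem ble_sref_of_sum_le (hn : 3 ≤ n) {α : Fin n → ℤ} (hα : IsPosRoot α) (hαc : α < cvec n)
    {l : List (Fin n → ℤ)} (hl : ∀ b ∈ l, IsPosRoot b) (hs : l.sum ≤ α) :
    ble (l.map sref).prod (sref α) := by
  by_cases heq : l.sum = α
  · exact ble_sref_of_sum_eq hn hα hαc hl heq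
  obtain ⟨i, hi⟩ : ∃ i, l.sum i < α i := by
    by_contra! h
    exact heq (le_antisymm hs h)
  have hl0 : 0 ≤ l.sum := List.sum_nonneg fun b hb => (hl b hb).nonneg
  have hi0 : l.sum i = 0 ∧ α i = 1 := by
    have := hl0 i; have := hαc.le i; simp only [Pi.zero_apply, cvec] at *; omega
  have hs' : l.sum + Pi.single i 1 ≤ α := fun j => by
    by_cases hj : j = i
    · subst hj; simp [hi0]
    · simpa [hj] using hs j
  have hl' : ∀ b ∈ l ++ [Pi.single i 1], IsPosRoot b := by
    simpa [or_imp, forall_and] using ⟨hl, isPosRoot_single hn i⟩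
  have hstep := bstep_of_isPosRoot hn (isPosRoot_single hn i)
    (lt_of_le_of_lt (le_add_of_nonneg_left hl0) (lt_of_le_of_lt hs' hαc))
    ((Pi.single_nonneg.mpr zero_le_one).trans
      (le_act_prod hn hl (Pi.single_nonneg.mpr zero_le_one) (lt_of_le_of_lt hs' hαc)))
  have hrec := ble_sref_of_sum_le hn hα hαc hl' (by simpa using hs')
  simp only [List.map_append, List.map_singleton, List.prod_append, List.prod_singleton] at hrec
  exact Relation.ReflTransGen.head hstep hrec
termination_by (∑ j, (α j - l.sum j)).toNat
decreasing_by
  have : ∑ j, (α j - (l ++ [Pi.single i 1]).sum j) + 1 = ∑ j, (α j - l.sum j) := by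
    simp only [List.sum_append, List.sum_cons, List.sum_nil, add_zero, Pi.add_apply,
      Finset.sum_sub_distrib, Finset.sum_add_distrib, Finset.sum_pi_single', Finset.mem_univ,
      if_true]
    ring
  have : 0 ≤ ∑ j, (α j - (l ++ [Pi.single i 1]).sum j) :=
    Finset.sum_nonneg fun j _ => by
      have := hs' j
      simp only [List.sum_append, List.sum_cons, List.sum_nil, add_zero, Pi.add_apply] at this ⊢
      linarith
  omega

end AffA.Aff

open AffA Aff in
/-- for an affine positive real root `α < c`, `Γ_α(id) = {s_α}`. -/
theorem curveNbhd_root (n : ℕ) (hn : 3 ≤ n) (α : Fin n → ℤ) (hα : IsPosRoot α)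
    (hαc : α < cvec n) :
    curveNbhd α (1 : Aff n) = {sref α} := by
  have hmem : sref α ∈ nbhdSet α 1 :=
    ⟨1, .refl, [α], by simpa using hα, by simp, by simp⟩
  have hle : ∀ v ∈ nbhdSet α 1, ble v (sref α) := by
    rintro v ⟨u, hu, l, hl, hs, rfl⟩
    rw [eq_one_of_ble_one hu, one_mul]
    exact ble_sref_of_sum_le hn hα hαc hl hs
  ext v
  refine ⟨fun hv => (hv.2 _ hmem (hle v hv.1)).symm, ?_⟩
  rintro rfl
  exact ⟨hmem, fun x hx hvx => eq_of_ble_of_len_le (hle x hx) (len_le_of_ble hvx)⟩
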